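/- arXiv:1909.03152 — 4 statements merged into one kernel-verified Lean document; each statement's English description precedes it below -/
import Mathlib

section
/- Every n-vertex graph with girth greater than k has at most O(n^{1 + 1/⌊k/2⌋}) edges; more precisely, there is a constant C such that any n-vertex graph with girth > k has at most C·n^{1+1/⌊k/2⌋} edges. -/
/-!
Put `r = ⌊k/2⌋`, so that the girth exceeds `2r`. If `G` had more than `2 n^{1+1/r}` edges, a vertex
set `T` minimal with average inner degree above `4 n^{1/r}` induces a subgraph in which every
vertex has more than `2 n^{1/r}` neighbours, hence at least `m + 1` with `m > n^{1/r}`. In that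
subgraph the paths of length `r` ending at a fixed vertex number at least `m^r`: a path extends
backwards in at least `m` ways, because a neighbour of its first vertex lying on it other than the
second vertex would close a cycle of length at most `r`. They also start at distinct vertices,
since two of them with the same start would close a cycle of length at most `2r`. Hence
`n ≥ m^r > n`.
-/

open Finset

namespace SimpleGraph

variable {V : Type*} {G : SimpleGraph V}

theorem Walk.IsPath.egirth_le_length_add_length {u v : V} {p q : G.Walk u v} (hp : p.IsPath)
    (hq : q.IsPath) (hpq : p ≠ q) : G.egirth ≤ p.length + q.length := by
  obtain ⟨_, _, p', q', hp', hq', hcyc⟩ := hp.exists_isCycle_of_ne hq hpq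
  calc G.egirth ≤ (p'.append q'.reverse).length := egirth_le_length hcyc
    _ ≤ p.length + q.length := by
      norm_cast
      simpa using add_le_add (length_le_of_isSubwalk hp') (length_le_of_isSubwalk hq')

theorem Walk.IsPath.eq_snd_of_adj_start_of_lt_egirth [DecidableEq V] {u v w : V}
    {p : G.Walk u v} (hp : p.IsPath) (hadj : G.Adj u w) (hw : w ∈ p.support)
    (hlen : p.length + 1 < G.egirth) : w = p.snd := by
  by_contra hne
  have hne' : p.takeUntil w hw ≠ hadj.toWalk := by
    intro h
    apply hne
    rw [← p.getVert_length_takeUntil hw, h]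
    rfl
  have := (hp.takeUntil hw).egirth_le_length_add_length (Walk.IsPath.of_adj hadj) hne'
  have hle := p.length_takeUntil_le_length hw
  simp only [Walk.length_cons, Walk.length_nil] at this
  exact hlen.not_ge (this.trans (by norm_cast; omega))

def Walk.sigmaTail {v : V} (p : Σ w, G.Walk w v) : Σ w, G.Walk w v := ⟨_, p.2.tail⟩

theorem Walk.sigmaTail_cons {u w v : V} (h : G.Adj u w) (q : G.Walk w v) :
    Walk.sigmaTail ⟨u, q.cons h⟩ = ⟨w, q⟩ := by
  cases q <;> rfl

section PathsTo

variable [Fintype V] [DecidableEq V] [DecidableRel G.Adj]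

variable (G) in
def pathsTo (v : V) (i : ℕ) : Finset (Σ w, G.Walk w v) :=
  {p ∈ univ.sigma fun w ↦ G.finsetWalkLength i w v | p.2.IsPath}

theorem mem_pathsTo {v : V} {i : ℕ} {p : Σ w, G.Walk w v} :
    p ∈ G.pathsTo v i ↔ p.2.length = i ∧ p.2.IsPath := by
  simp [pathsTo, mem_finsetWalkLength_iff]

theorem card_pathsTo_pos (v : V) : 0 < #(G.pathsTo v 0) :=
  card_pos.mpr ⟨⟨v, .nil⟩, mem_pathsTo.mpr ⟨rfl, .nil⟩⟩

theorem le_card_filter_sigmaTail_eq {v x : V} {q : G.Walk x v} (hq : q.IsPath)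
    {i m : ℕ} (hlen : q.length = i) (hi : i + 1 < G.egirth) (hdeg : m < G.degree x) :
    m ≤ #{p ∈ G.pathsTo v (i + 1) | Walk.sigmaTail p = ⟨x, q⟩} := by
  have hext : m ≤ #{w ∈ G.neighborFinset x | w ∉ q.support} := by
    have hon : {w ∈ G.neighborFinset x | w ∈ q.support} ⊆ {q.snd} := fun w hw ↦ by
      rw [mem_filter, mem_neighborFinset] at hw
      exact mem_singleton.mpr (hq.eq_snd_of_adj_start_of_lt_egirth hw.1 hw.2 (hlen ▸ hi))
    have := card_filter_add_card_filter_not (s := G.neighborFinset x) (· ∈ q.support)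
    have := card_le_card hon
    rw [card_neighborFinset_eq_degree, card_singleton] at *
    omega
  refine hext.trans (card_le_card_of_surjOn Sigma.fst fun w hw ↦ ?_)
  rw [coe_filter, Set.mem_ofPred_eq, mem_neighborFinset] at hw
  refine ⟨⟨w, q.cons hw.1.symm⟩, ?_, rfl⟩
  simp only [coe_filter, Set.mem_ofPred_eq, mem_pathsTo, Walk.sigmaTail_cons]
  exact ⟨⟨by simp [hlen], hq.cons hw.2⟩, trivial⟩

theorem sigmaTail_mem_pathsTo {v : V} {i : ℕ} {p : Σ w, G.Walk w v}
    (hp : p ∈ G.pathsTo v (i + 1)) : Walk.sigmaTail p ∈ G.pathsTo v i := by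
  obtain ⟨w, _ | ⟨h, q⟩⟩ := p
  · simp [mem_pathsTo] at hp
  · rw [mem_pathsTo, Walk.length_cons, Walk.cons_isPath_iff] at hp
    rw [Walk.sigmaTail_cons, mem_pathsTo]
    exact ⟨Nat.succ_injective hp.1, hp.2.1⟩

theorem mul_card_pathsTo_le {v : V} {i m : ℕ} (hi : i + 1 < G.egirth)
    (hdeg : ∀ x, m < G.degree x) : m * #(G.pathsTo v i) ≤ #(G.pathsTo v (i + 1)) :=
  mul_card_image_le_card_of_maps_to (fun _ ↦ sigmaTail_mem_pathsTo) m fun ⟨x, _⟩ hq ↦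
    le_card_filter_sigmaTail_eq (mem_pathsTo.mp hq).2 (mem_pathsTo.mp hq).1 hi (hdeg x)

theorem card_pathsTo_le_card {v : V} {r : ℕ} (hr : 2 * r < G.egirth) :
    #(G.pathsTo v r) ≤ Fintype.card V := by
  refine card_le_card_of_injOn Sigma.fst (fun _ _ ↦ mem_univ _)
    fun ⟨w, p⟩ hp ⟨w', p'⟩ hp' hww' ↦ ?_
  rw [mem_coe, mem_pathsTo] at hp hp'
  dsimp only at hww'
  subst hww'
  by_contra hne
  have := hp.2.egirth_le_length_add_length hp'.2 fun h ↦ hne (congrArg _ h)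
  rw [hp.1, hp'.1, ← two_mul] at this
  exact hr.not_ge (by exact_mod_cast this)

theorem pow_le_card_pathsTo {v : V} {m r : ℕ} (hdeg : ∀ x, m < G.degree x)
    (hr : 2 * r < G.egirth) {i : ℕ} (hi : i ≤ r) : m ^ i ≤ #(G.pathsTo v i) := by
  induction i with
  | zero => exact card_pathsTo_pos v
  | succ i ih =>
    have hi' : (i + 1 : ℕ∞) < G.egirth := lt_of_le_of_lt (by exact_mod_cast (by omega)) hr
    calc m ^ (i + 1) = m * m ^ i := pow_succ' m i
      _ ≤ m * #(G.pathsTo v i) := Nat.mul_le_mul_left m (ih (by omega))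
      _ ≤ #(G.pathsTo v (i + 1)) := mul_card_pathsTo_le hi' hdeg

theorem pow_le_card_of_lt_degree_of_lt_egirth [Nonempty V] {m r : ℕ}
    (hdeg : ∀ x, m < G.degree x) (hr : 2 * r < G.egirth) : m ^ r ≤ Fintype.card V :=
  (pow_le_card_pathsTo (v := Classical.arbitrary V) hdeg hr le_rfl).trans
    (card_pathsTo_le_card hr)

end PathsTo

section DenseCore

variable [DecidableRel G.Adj]

theorem degree_induce_eq_card_filter_adj [Fintype V] (T : Finset V) (x : (T : Set V)) :
    (G.induce (T : Set V)).degree x = #{y ∈ T | G.Adj x y} := by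
  rw [← card_neighborFinset_eq_degree, ← card_map (.subtype (· ∈ (T : Set V)))]
  congr 1
  ext y
  simp [and_comm]

variable [DecidableEq V]

theorem sum_card_filter_adj_eq_erase {S : Finset V} {v : V} (hv : v ∈ S) :
    ∑ x ∈ S, #{y ∈ S | G.Adj x y} =
      ∑ x ∈ S.erase v, #{y ∈ S.erase v | G.Adj x y} + 2 * #{y ∈ S | G.Adj v y} := by
  simp only [card_filter]
  rw [← add_sum_erase S _ hv]
  have hsplit : ∀ x ∈ S.erase v, ∑ y ∈ S, (if G.Adj x y then 1 else 0) =
      ∑ y ∈ S.erase v, (if G.Adj x y then 1 else 0) + if G.Adj v x then 1 else 0 := by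
    intro x _
    simp only [← sum_erase_add S _ hv, G.adj_comm]
  rw [sum_congr rfl hsplit, sum_add_distrib]
  have hv' : ∑ x ∈ S.erase v, (if G.Adj v x then 1 else 0) =
      ∑ y ∈ S, (if G.Adj v y then 1 else 0) := by
    rw [← add_sum_erase S _ hv]; simp
  rw [hv']
  ring

theorem exists_forall_lt_card_filter_adj {c : ℝ} {S : Finset V}
    (hS : 2 * c * #S < ∑ x ∈ S, #{y ∈ S | G.Adj x y}) :
    ∃ T : Finset V, T.Nonempty ∧ ∀ x ∈ T, c < #{y ∈ T | G.Adj x y} := by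
  obtain ⟨T, hT, hmin⟩ := exists_minimal_of_wellFoundedLT
    (fun T : Finset V ↦ 2 * c * #T < ∑ x ∈ T, #{y ∈ T | G.Adj x y}) ⟨S, hS⟩
  refine ⟨T, nonempty_iff_ne_empty.mpr fun h ↦ by simp [h] at hT, fun x hx ↦ ?_⟩
  have herase : ¬ 2 * c * #(T.erase x) < ∑ y ∈ T.erase x, #{z ∈ T.erase x | G.Adj y z} :=
    fun h ↦ (notMem_erase x T) (hmin h (erase_subset x T) hx)
  rw [sum_card_filter_adj_eq_erase (G := G) hx] at hT
  rw [card_erase_of_mem hx] at herase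
  push_cast [Nat.one_le_iff_ne_zero.mpr (card_ne_zero_of_mem hx)] at hT herase
  linarith

end DenseCore

theorem pow_lt_card_of_lt_card_edgeFinset [Fintype V] [DecidableRel G.Adj] {r : ℕ}
    (hr0 : r ≠ 0) (hr : 2 * r < G.egirth) {x : ℝ} (hx : 1 ≤ x)
    (hE : 2 * x * Fintype.card V < #G.edgeFinset) :
    x ^ r < Fintype.card V := by
  classical
  have hsum : 2 * (2 * x) * #(univ : Finset V) < ∑ v ∈ univ, #{y ∈ univ | G.Adj v y} := by
    simp only [← neighborFinset_eq_filter, card_neighborFinset_eq_degree,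
      sum_degrees_eq_twice_card_edges, card_univ]
    push_cast
    linarith
  obtain ⟨T, hTne, hT⟩ := exists_forall_lt_card_filter_adj hsum
  have hdeg : ∀ v : (T : Set V), ⌊2 * x⌋₊ < (G.induce (T : Set V)).degree v := fun v ↦ by
    rw [degree_induce_eq_card_filter_adj, Nat.floor_lt (by positivity)]
    exact hT v v.2
  have hgirth : 2 * r < (G.induce (T : Set V)).egirth :=
    hr.trans_le (Embedding.induce _).isContained.egirth_le
  have : Nonempty (T : Set V) := hTne.coe_sort
  have hm : x < ⌊2 * x⌋₊ := by linarith [Nat.sub_one_lt_floor (2 * x)]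
  calc x ^ r < (⌊2 * x⌋₊ : ℝ) ^ r := pow_lt_pow_left₀ hm (by positivity) hr0
    _ ≤ Fintype.card (T : Set V) := by
      exact_mod_cast pow_le_card_of_lt_degree_of_lt_egirth hdeg hgirth
    _ ≤ Fintype.card V := by exact_mod_cast Fintype.card_subtype_le _

end SimpleGraph

/-- The Moore bound: there is a constant `C` (depending on `k`) such that every `n`-vertex
graph of girth greater than `k` has at most `C · n^{1 + 1/⌊k/2⌋}` edges. -/
theorem moore_bound (k : ℕ) (hk : 2 ≤ k) :
    ∃ C : ℝ, ∀ (n : ℕ) (V : Type) (_ : Fintype V) (G : SimpleGraph V),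
      Fintype.card V = n → (k : ℕ∞) < G.egirth →
      (G.edgeSet.ncard : ℝ) ≤ C * (n : ℝ) ^ (1 + 1 / (k / 2 : ℕ) : ℝ) := by
  classical
  refine ⟨2, fun n V _ G hn hgirth ↦ ?_⟩
  set r := k / 2
  have hr0 : r ≠ 0 := by omega
  have hr : 2 * r < G.egirth := lt_of_le_of_lt (by exact_mod_cast Nat.mul_div_le k 2) hgirth
  rcases Nat.eq_zero_or_pos n with rfl | hn0
  · have : IsEmpty V := Fintype.card_eq_zero_iff.mp hn
    simp only [Set.eq_empty_of_isEmpty G.edgeSet, Set.ncard_empty, CharP.cast_eq_zero]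
    positivity
  have hnR : (0 : ℝ) < n := by exact_mod_cast hn0
  have hxr : ((n : ℝ) ^ (1 / r : ℝ)) ^ r = n := by
    rw [one_div, Real.rpow_inv_natCast_pow hnR.le hr0]
  rw [Real.rpow_add hnR, Real.rpow_one, ← G.coe_edgeFinset, Set.ncard_coe_finset, ← mul_assoc]
  by_contra! hE
  have := G.pow_lt_card_of_lt_card_edgeFinset (x := (n : ℝ) ^ (1 / r : ℝ)) hr0 hr
    (Real.one_le_rpow (by exact_mod_cast hn0) (by positivity)) (by rw [hn]; linarith)
  rw [hxr, hn] at this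
  exact this.false
end

section
/- The output of the greedy spanner algorithm with parameter t is a t-spanner of the input weighted graph G, regardless of the order in which the edges are processed. Precisely: if E' is built by iterating over the edges of G in any order and adding edge uv to E' whenever the current distance d_{(V,E')}(u,v) exceeds t·w_{uv}, then the final graph (V,E') satisfies d_{(V,E')}(u,v) ≤ t·d_G(u,v) for all vertices u,v. -/
open scoped ENNReal Classical

variable {V : Type*}

/-- The total weight of a walk: the sum of the weights of its (directed) edges. -/
noncomputable def walkWeight (w : V → V → ℝ≥0∞) {G : SimpleGraph V} {u v : V}
    (p : G.Walk u v) : ℝ≥0∞ :=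
  (p.darts.map (fun d => w d.toProd.1 d.toProd.2)).sum

/-- Weighted shortest-path distance: the infimum of walk weights (`⊤` if unreachable). -/
noncomputable def wdist (G : SimpleGraph V) (w : V → V → ℝ≥0∞) (u v : V) : ℝ≥0∞ :=
  ⨅ p : G.Walk u v, walkWeight w p

/-- One greedy pass: process the edges in the given list order, adding an edge whenever the
current spanner distance between its endpoints exceeds `t` times its weight. -/
noncomputable def greedyAux (w : V → V → ℝ≥0∞) (t : ℝ≥0∞) :
    List (V × V) → SimpleGraph V → SimpleGraph V
  | [], G' => G'
  | e :: rest, G' =>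
      greedyAux w t rest
        (if t * w e.1 e.2 < wdist G' w e.1 e.2
          then G' ⊔ SimpleGraph.fromEdgeSet {s(e.1, e.2)} else G')

/-!
When an edge `uv` of `G` is processed it is either added, or already spanned with stretch `t`;
later additions only shorten distances, so every edge of `G` ends up with stretch at most `t`.
Summing along a shortest walk of `G`, which exists because `V` is finite (a path realises the
infimum), bounds the stretch of every pair. Finiteness matters when `t = ⊤`, where `t` does not
commute with an infimum that is not attained.
-/

open SimpleGraph

section walkWeight

variable {G : SimpleGraph V} {w : V → V → ℝ≥0∞} {u v x : V}

@[simp]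
lemma walkWeight_nil : walkWeight w (Walk.nil : G.Walk u u) = 0 := rfl

@[simp]
lemma walkWeight_cons (h : G.Adj u x) (p : G.Walk x v) :
    walkWeight w (Walk.cons h p) = w u x + walkWeight w p := by
  simp [walkWeight]

lemma walkWeight_append (p : G.Walk u x) (q : G.Walk x v) :
    walkWeight w (p.append q) = walkWeight w p + walkWeight w q := by
  simp [walkWeight]

lemma walkWeight_reverse (hsymm : ∀ a b, w a b = w b a) (p : G.Walk u v) :
    walkWeight w p.reverse = walkWeight w p := by
  simp [walkWeight, Walk.darts_reverse, Function.comp_def, hsymm]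

lemma walkWeight_bypass_le (p : G.Walk u v) : walkWeight w p.bypass ≤ walkWeight w p :=
  (p.darts_bypass_sublist_darts.map _).sum_le_sum fun _ _ => zero_le

end walkWeight

section wdist

variable {G H : SimpleGraph V} {w : V → V → ℝ≥0∞} {t : ℝ≥0∞} {u v x : V}

lemma wdist_le_walkWeight (p : G.Walk u v) : wdist G w u v ≤ walkWeight w p := iInf_le _ p

lemma wdist_self : wdist G w u u = 0 :=
  nonpos_iff_eq_zero.1 (wdist_le_walkWeight Walk.nil)

lemma wdist_le_of_adj (h : G.Adj u v) : wdist G w u v ≤ w u v := by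
  simpa using wdist_le_walkWeight (w := w) (Walk.cons h Walk.nil)

lemma wdist_triangle : wdist G w u v ≤ wdist G w u x + wdist G w x v := by
  change _ ≤ (⨅ p : G.Walk u x, walkWeight w p) + ⨅ q : G.Walk x v, walkWeight w q
  simp only [ENNReal.iInf_add, ENNReal.add_iInf]
  exact le_iInf₂ fun q p => (wdist_le_walkWeight (p.append q)).trans_eq (walkWeight_append p q)

lemma wdist_comm (hsymm : ∀ a b, w a b = w b a) : wdist G w u v = wdist G w v u := by
  have key : ∀ a b, wdist G w a b ≤ wdist G w b a := fun a b =>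
    le_iInf fun p => (wdist_le_walkWeight p.reverse).trans_eq (walkWeight_reverse hsymm p)
  exact (key u v).antisymm (key v u)

lemma wdist_le_mul_walkWeight (hedge : ∀ a b, G.Adj a b → wdist H w a b ≤ t * w a b)
    (p : G.Walk u v) : wdist H w u v ≤ t * walkWeight w p := by
  induction p with
  | nil => simp [wdist_self]
  | cons ha q ih =>
      rw [walkWeight_cons, mul_add]
      exact wdist_triangle.trans (add_le_add (hedge _ _ ha) ih)

lemma wdist_anti (h : G ≤ H) : wdist H w u v ≤ wdist G w u v :=
  le_iInf fun p => by
    simpa using wdist_le_mul_walkWeight (t := 1) (fun _ _ hab => by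
      simpa using wdist_le_of_adj (h hab)) p

lemma exists_walkWeight_eq_wdist [Finite V] (h : G.Reachable u v) :
    ∃ p : G.Walk u v, walkWeight w p = wdist G w u v := by
  have := Fintype.ofFinite V
  have : Nonempty (G.Path u v) := Nonempty.map Walk.toPath h
  obtain ⟨p, hp⟩ := exists_eq_ciInf_of_finite (f := fun p : G.Path u v => walkWeight w p.1)
  refine ⟨p.1, (wdist_le_walkWeight _).antisymm' (le_iInf fun q => ?_)⟩
  exact hp.symm ▸ (ciInf_le (OrderBot.bddBelow _) q.toPath).trans (walkWeight_bypass_le q)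

lemma wdist_le_mul_wdist [Finite V] (ht : t ≠ 0)
    (hedge : ∀ a b, G.Adj a b → wdist H w a b ≤ t * w a b) :
    wdist H w u v ≤ t * wdist G w u v := by
  by_cases h : G.Reachable u v
  · obtain ⟨p, hp⟩ := exists_walkWeight_eq_wdist (w := w) h
    exact hp ▸ wdist_le_mul_walkWeight hedge p
  · have : IsEmpty (G.Walk u v) := not_nonempty_iff.1 h
    rw [show wdist G w u v = ⊤ from iInf_of_empty _, ENNReal.mul_top ht]
    exact le_top

lemma wdist_sup_edge_le (G : SimpleGraph V) (a b : V) :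
    wdist (G ⊔ fromEdgeSet {s(a, b)}) w a b ≤ w a b := by
  by_cases hab : a = b
  · simp [hab, wdist_self]
  · exact wdist_le_of_adj (Or.inr ((fromEdgeSet_adj _).2 ⟨rfl, hab⟩))

end wdist

section greedy

variable {w : V → V → ℝ≥0∞} {t : ℝ≥0∞}

lemma le_greedyAux : ∀ (l : List (V × V)) (G : SimpleGraph V), G ≤ greedyAux w t l G
  | [], _ => le_rfl
  | _ :: rest, _ => by
      rw [greedyAux]
      refine le_trans ?_ (le_greedyAux rest _)
      split <;> simp

lemma wdist_greedyAux_le (ht : 1 ≤ t) :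
    ∀ (l : List (V × V)) (G : SimpleGraph V),
      ∀ e ∈ l, wdist (greedyAux w t l G) w e.1 e.2 ≤ t * w e.1 e.2
  | [], _, _, he => absurd he List.not_mem_nil
  | f :: rest, G, e, he => by
      rw [greedyAux]
      rcases List.mem_cons.1 he with rfl | he
      · refine (wdist_anti (le_greedyAux rest _)).trans ?_
        split_ifs with hlt
        · exact (wdist_sup_edge_le G _ _).trans (le_mul_of_one_le_left' ht)
        · exact not_lt.1 hlt
      · exact wdist_greedyAux_le ht rest _ e he

end greedy

theorem greedy_is_spanner_general [Fintype V]
    (G : SimpleGraph V)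
    (w : V → V → ℝ≥0∞) (hsymm : ∀ u v, w u v = w v u)
    (t : ℝ≥0∞) (ht : 1 ≤ t)
    (l : List (V × V))
    (hl₂ : ∀ u v : V, G.Adj u v → (u, v) ∈ l ∨ (v, u) ∈ l) :
    ∀ u v : V, wdist (greedyAux w t l ⊥) w u v ≤ t * wdist G w u v := by
  intro u v
  refine wdist_le_mul_wdist (one_pos.trans_le ht).ne' fun a b hab => ?_
  rcases hl₂ a b hab with h | h
  · exact wdist_greedyAux_le ht l ⊥ (a, b) h
  · rw [wdist_comm hsymm, hsymm a b]
    exact wdist_greedyAux_le ht l ⊥ (b, a) h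

/-- The output of the greedy spanner algorithm with parameter `t` is a `t`-spanner of `G`,
regardless of the order in which the edges are processed. -/
theorem greedy_is_spanner [Fintype V]
    (G : SimpleGraph V) (hconn : G.Connected)
    (w : V → V → ℝ≥0∞) (hsymm : ∀ u v, w u v = w v u)
    (hpos : ∀ u v, G.Adj u v → 0 < w u v) (hfin : ∀ u v, G.Adj u v → w u v ≠ ⊤)
    (t : ℝ≥0∞) (ht : 1 ≤ t)
    (l : List (V × V))
    (hl₁ : ∀ e ∈ l, G.Adj e.1 e.2)
    (hl₂ : ∀ u v : V, G.Adj u v → (u, v) ∈ l ∨ (v, u) ∈ l) :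
    ∀ u v : V, wdist (greedyAux w t l ⊥) w u v ≤ t * wdist G w u v :=
  greedy_is_spanner_general G w hsymm t ht l hl₂
end

section
/- Let π be a consistent tiebreaking scheme on a directed graph G, let P be a set of vertex pairs, and let H be the subgraph formed by the union of the paths π(p) for p ∈ P. Then the number of branching triples of H (sets of three distinct edges of H entering a common vertex) is at most C(|P|,3): for any three pairs in P there is at most one branching triple whose three edges are assigned among the three corresponding paths. -/
open scoped ENNReal Classical

variable {V : Type*}

/-! Each branching triple at a vertex `v` is charged to a triple `S ⊆ P` of pairs whose paths
contain its three arcs. Since a path enters `v` at most once, the triple of arcs is recovered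
from `S` and `v`. And `v` is recovered from `S`: if the three paths of `S` entered both `v ≠ v'`
through distinct arcs, each of them would contain `π(v, v')` or `π(v', v)` by consistency, so two
of them would contain the same one and hence share its last arc. -/

open Finset Function

theorem Finset.sum_choose_card_filter_le {α β γ : Type*} [Fintype γ] [DecidableEq β]
    [DecidableEq γ] (D : Finset α) (key : α → γ) (P : Finset β) (f : α → β)
    {k : ℕ} (hfP : ∀ e ∈ D, f e ∈ P)
    (hinj : ∀ v, Set.InjOn f (D.filter (key · = v)))
    (hkey : ∀ (v v' : γ) (e e' : Fin k → α), Injective e → Injective e' →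
      (∀ i, e i ∈ D.filter (key · = v)) → (∀ i, e' i ∈ D.filter (key · = v')) →
      f ∘ e = f ∘ e' → v = v') :
    ∑ v, (#(D.filter (key · = v))).choose k ≤ (#P).choose k := by
  calc ∑ v, (#(D.filter (key · = v))).choose k
      = #(univ.sigma fun v => (D.filter (key · = v)).powersetCard k) := by
        simp only [card_sigma, card_powersetCard]
    _ ≤ #(P.powersetCard k) := by
        refine card_le_card_of_injOn (fun x => x.2.image f) ?_ ?_
        · rintro ⟨v, T⟩ hT
          simp only [coe_sigma, Set.mem_sigma_iff, mem_coe, mem_univ, true_and,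
            mem_powersetCard] at hT ⊢
          refine ⟨fun p hp => ?_, ?_⟩
          · obtain ⟨e, he, rfl⟩ := mem_image.1 hp
            exact hfP e (mem_filter.1 (hT.1 he)).1
          · rw [card_image_of_injOn ((hinj v).mono hT.1), hT.2]
        · rintro ⟨v, T⟩ hT ⟨v', T'⟩ hT' himg
          simp only [coe_sigma, Set.mem_sigma_iff, mem_coe, mem_univ, true_and,
            mem_powersetCard] at hT hT' himg
          let e : Fin k → α := fun i => (T.equivFin.symm (i.cast hT.2.symm)).1
          have he : Injective e := fun i j h => by simpa [e] using h
          have heT : ∀ i, e i ∈ T := fun i => (T.equivFin.symm _).2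
          have hfe' : ∀ i, ∃ e' ∈ T', f e' = f (e i) := fun i =>
            mem_image.1 (himg ▸ mem_image_of_mem f (heT i))
          choose e' he'T hfe' using hfe'
          have hfe : f ∘ e = f ∘ e' := funext fun i => (hfe' i).symm
          have he' : Injective e' := by
            refine Injective.of_comp (f := f) (hfe ▸ fun i j h => he ?_)
            exact hinj v (hT.1 (heT i)) (hT.1 (heT j)) h
          obtain rfl : v = v' := hkey v v' e e' he he' (fun i => hT.1 (heT i))
            (fun i => hT'.1 (he'T i)) hfe
          rw [image_eq_image_iff_of_injOn (hinj v) hT.1 hT'.1] at himg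
          rw [himg]
    _ = (#P).choose k := card_powersetCard k P

namespace SimpleGraph

variable {G : SimpleGraph V}

def IsConsistentTiebreaking (π : ∀ u v : V, G.Walk u v) : Prop :=
  ∀ (a b x y : V) (q₁ : G.Walk a x) (q₂ : G.Walk x y) (q₃ : G.Walk y b),
    π a b = q₁.append (q₂.append q₃) → q₂ = π x y

namespace Walk

abbrev arcs {u v : V} (p : G.Walk u v) : List (V × V) := p.darts.map Dart.toProd

theorem snd_mem_support_of_mem_arcs {u v : V} {p : G.Walk u v} {e : V × V} (he : e ∈ p.arcs) :
    e.2 ∈ p.support := by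
  obtain ⟨d, hd, rfl⟩ := List.mem_map.1 he
  exact p.dart_snd_mem_support_of_mem_darts hd

theorem IsPath.eq_of_mem_arcs_of_snd_eq {u v : V} {p : G.Walk u v} (hp : p.IsPath)
    {e₁ e₂ : V × V} (h₁ : e₁ ∈ p.arcs) (h₂ : e₂ ∈ p.arcs) (h : e₁.2 = e₂.2) : e₁ = e₂ := by
  have hnodup : (p.arcs.map Prod.snd).Nodup := by
    rw [List.map_map]
    exact p.map_snd_darts ▸ hp.support_nodup.sublist (List.tail_sublist _)
  exact List.inj_on_of_nodup_map hnodup h₁ h₂ h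

theorem IsPath.eq_lastDart_of_arcs_subset {u v x y : V} {p : G.Walk u v} (hp : p.IsPath)
    {q : G.Walk x y} (hq : q.arcs ⊆ p.arcs) (hxy : x ≠ y) {e : V × V} (he : e ∈ p.arcs)
    (hey : e.2 = y) : e = (q.lastDart (not_nil_of_ne hxy)).toProd :=
  hp.eq_of_mem_arcs_of_snd_eq he (hq (List.mem_map_of_mem (lastDart_mem_darts _))) hey

theorem exists_eq_append_append_of_mem_support {a b x y : V} (W : G.Walk a b)
    (hx : x ∈ W.support) (hy : y ∈ W.support) :
    (∃ (q₁ : G.Walk a x) (q₂ : G.Walk x y) (q₃ : G.Walk y b), W = q₁.append (q₂.append q₃)) ∨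
    (∃ (q₁ : G.Walk a y) (q₂ : G.Walk y x) (q₃ : G.Walk x b), W = q₁.append (q₂.append q₃)) := by
  by_cases h : y ∈ (W.dropUntil x hx).support
  · left
    exact ⟨W.takeUntil x hx, (W.dropUntil x hx).takeUntil y h, (W.dropUntil x hx).dropUntil y h,
      by rw [take_spec, take_spec]⟩
  · right
    have hy' : y ∈ (W.takeUntil x hx).support := by
      rw [← take_spec W hx, support_append] at hy
      exact (List.mem_append.1 hy).resolve_right (mt List.mem_of_mem_tail h)
    refine ⟨(W.takeUntil x hx).takeUntil y hy', (W.takeUntil x hx).dropUntil y hy',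
      W.dropUntil x hx, ?_⟩
    rw [append_assoc, take_spec, take_spec]

end Walk

open Walk

variable {π : ∀ u v : V, G.Walk u v}

theorem IsConsistentTiebreaking.arcs_subset_or_arcs_subset (hπ : IsConsistentTiebreaking π)
    {a b x y : V} (hx : x ∈ (π a b).support) (hy : y ∈ (π a b).support) :
    (π x y).arcs ⊆ (π a b).arcs ∨ (π y x).arcs ⊆ (π a b).arcs := by
  refine (exists_eq_append_append_of_mem_support _ hx hy).imp ?_ ?_ <;>
  · rintro ⟨q₁, q₂, q₃, h⟩
    rw [← hπ _ _ _ _ q₁ q₂ q₃ h, h]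
    intro e he
    simp only [arcs, darts_append, List.map_append, List.mem_append]
    exact .inr (.inl he)

theorem IsConsistentTiebreaking.exists_forall_eq_or_eq (hπ : IsConsistentTiebreaking π)
    (hpath : ∀ u v, (π u v).IsPath) {v v' : V} (hne : v ≠ v') :
    ∃ c c' : V × V, ∀ a b : V, ∀ e ∈ (π a b).arcs, ∀ e' ∈ (π a b).arcs,
      e.2 = v → e'.2 = v' → e = c ∨ e' = c' := by
  refine ⟨((π v' v).lastDart (not_nil_of_ne hne.symm)).toProd,
    ((π v v').lastDart (not_nil_of_ne hne)).toProd, fun a b e he e' he' hv hv' => ?_⟩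
  have hvs : v ∈ (π a b).support := hv ▸ snd_mem_support_of_mem_arcs he
  have hvs' : v' ∈ (π a b).support := hv' ▸ snd_mem_support_of_mem_arcs he'
  rcases hπ.arcs_subset_or_arcs_subset hvs hvs' with h | h
  · exact .inr ((hpath a b).eq_lastDart_of_arcs_subset h hne he' hv')
  · exact .inl ((hpath a b).eq_lastDart_of_arcs_subset h hne.symm he hv)

theorem IsConsistentTiebreaking.eq_of_injective_arcs (hπ : IsConsistentTiebreaking π)
    (hpath : ∀ u v, (π u v).IsPath) {ι : Type*} [Fintype ι] (hι : 2 < Fintype.card ι)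
    (p : ι → V × V) {e e' : ι → V × V} (he : Injective e) (he' : Injective e')
    (hmem : ∀ i, e i ∈ (π (p i).1 (p i).2).arcs) (hmem' : ∀ i, e' i ∈ (π (p i).1 (p i).2).arcs)
    {v v' : V} (hv : ∀ i, (e i).2 = v) (hv' : ∀ i, (e' i).2 = v') : v = v' := by
  by_contra hne
  obtain ⟨c, c', hc⟩ := hπ.exists_forall_eq_or_eq hpath hne
  obtain ⟨i, j, hij, hcij⟩ := Fintype.exists_ne_map_eq_of_card_lt (fun i => decide (e i = c))
    (by rwa [Fintype.card_bool])
  have hcij : e i = c ↔ e j = c := decide_eq_decide.1 hcij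
  have hcases := fun i => hc _ _ _ (hmem i) _ (hmem' i) (hv i) (hv' i)
  by_cases hi : e i = c
  · exact hij (he (hi.trans (hcij.1 hi).symm))
  · have hj : ¬e j = c := hcij.not.1 hi
    exact hij (he' (((hcases i).resolve_left hi).trans ((hcases j).resolve_left hj).symm))

end SimpleGraph

theorem branching_triples_le_general [Fintype V]
    (G : SimpleGraph V)
    (w : V → V → ℝ≥0∞)
    (π : ∀ u v : V, G.Walk u v)
    (hπ : ∀ u v : V, (π u v).IsPath ∧ walkWeight w (π u v) = wdist G w u v)
    (hcons : ∀ (a b x y : V) (q₁ : G.Walk a x) (q₂ : G.Walk x y) (q₃ : G.Walk y b),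
      π a b = q₁.append (q₂.append q₃) → q₂ = π x y)
    (P : Finset (V × V)) :
    -- `D` is the set of directed edges of `H = (V, ⋃_{p ∈ P} π(p))`
    letI D : Finset (V × V) := Finset.univ.filter
      (fun e : V × V => ∃ p ∈ P, e ∈ (π p.1 p.2).darts.map SimpleGraph.Dart.toProd)
    -- the number of branching triples of `H` is at most `C(|P|, 3)`
    ∑ v : V, ((D.filter (fun e => e.2 = v)).card).choose 3 ≤ P.card.choose 3 := by
  set D : Finset (V × V) := univ.filter fun e => ∃ p ∈ P, e ∈ (π p.1 p.2).arcs
  have hpath u v : (π u v).IsPath := (hπ u v).1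
  have hD : ∀ e ∈ D, ∃ p ∈ P, e ∈ (π p.1 p.2).arcs := by simp [D]
  choose! f hfP hfe using hD
  refine sum_choose_card_filter_le D Prod.snd P f hfP ?_ ?_
  · intro v e₁ he₁ e₂ he₂ hf
    rw [mem_coe, mem_filter] at he₁ he₂
    exact (hpath _ _).eq_of_mem_arcs_of_snd_eq (hfe e₁ he₁.1) (hf ▸ hfe e₂ he₂.1)
      (he₁.2.trans he₂.2.symm)
  · intro v v' e e' he he' hev he'v' hf
    simp only [mem_filter] at hev he'v'
    exact SimpleGraph.IsConsistentTiebreaking.eq_of_injective_arcs hcons hpath (by simp)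
      (f ∘ e) he he' (fun i => hfe _ (hev i).1) (fun i => congrFun hf i ▸ hfe _ (he'v' i).1)
      (fun i => (hev i).2) (fun i => (he'v' i).2)

/-- Branching-triple bound: if `π` is a consistent tiebreaking scheme, `P` a set of vertex
pairs and `H` the union of the paths `π(p)`, `p ∈ P`, then the number of branching triples
of `H` (sets of three distinct directed edges entering a common vertex) is at most
`C(|P|, 3)`. -/
theorem branching_triples_le [Fintype V]
    (G : SimpleGraph V) (hconn : G.Connected)
    (w : V → V → ℝ≥0∞) (hsymm : ∀ u v, w u v = w v u)
    (hpos : ∀ u v, G.Adj u v → 0 < w u v) (hfin : ∀ u v, G.Adj u v → w u v ≠ ⊤)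
    (π : ∀ u v : V, G.Walk u v)
    (hπ : ∀ u v : V, (π u v).IsPath ∧ walkWeight w (π u v) = wdist G w u v)
    (hcons : ∀ (a b x y : V) (q₁ : G.Walk a x) (q₂ : G.Walk x y) (q₃ : G.Walk y b),
      π a b = q₁.append (q₂.append q₃) → q₂ = π x y)
    (P : Finset (V × V)) :
    -- `D` is the set of directed edges of `H = (V, ⋃_{p ∈ P} π(p))`
    letI D : Finset (V × V) := Finset.univ.filter
      (fun e : V × V => ∃ p ∈ P, e ∈ (π p.1 p.2).darts.map SimpleGraph.Dart.toProd)
    -- the number of branching triples of `H` is at most `C(|P|, 3)`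
    ∑ v : V, ((D.filter (fun e => e.2 = v)).card).choose 3 ≤ P.card.choose 3 :=
  branching_triples_le_general G w π hπ hcons P
end

section
/- The bipartite double cover construction preserves spanners: let G = (V,E) be a graph and let G' be the bipartite graph with vertex set V_L ∪ V_R (two copies of V) and edges {u_L, v_R}, {u_R, v_L} for each edge uv of G. If H' is an additive +2c-spanner of G', then the graph H on V whose edges are {u,v} for every edge of H' between a copy of u and a copy of v is an additive +2c-spanner of G with at most as many edges as H'. -/
open scoped ENNReal Classical

/-- The bipartite double cover of `G`: two copies `V × Bool` of the vertex set, with the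
copies `(u, i)` and `(v, j)` adjacent iff `uv` is an edge of `G` and `i ≠ j`. -/
def doubleCover {V : Type*} (G : SimpleGraph V) : SimpleGraph (V × Bool) where
  Adj a b := G.Adj a.1 b.1 ∧ a.2 ≠ b.2
  symm := ⟨fun a b h => ⟨h.1.symm, Ne.symm h.2⟩⟩
  loopless := ⟨fun a h => G.loopless.irrefl a.1 h.1⟩

/-- Projection of a subgraph of the double cover back to `G`: `u ~ v` iff some copy of `u`
is adjacent to some copy of `v`. -/
def projectDown {V : Type*} (G : SimpleGraph V) (H' : SimpleGraph (V × Bool))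
    (hsub : H' ≤ doubleCover G) : SimpleGraph V where
  Adj u v := ∃ i j : Bool, H'.Adj (u, i) (v, j)
  symm := ⟨fun u v ⟨i, j, h⟩ => ⟨j, i, h.symm⟩⟩
  loopless := ⟨fun u ⟨i, j, h⟩ => G.loopless.irrefl u (hsub h).1⟩

/-!
A walk of length `ℓ` from `u` to `v` in `G` lifts, by alternating sides, to a walk of length `ℓ`
in the double cover from `(u, i)` to some copy of `v`; so some copy of `v` is no farther from
`(u, i)` in `G'` than `v` is from `u` in `G`. Conversely, the first projection is a graph
homomorphism from `H'` onto its projection `H`, so distances can only shrink and every edge of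
`H` is the image of an edge of `H'`. Chaining these with the spanner inequality of `H'` gives
the spanner inequality of `H`.
-/

namespace SimpleGraph

variable {V W : Type*} {G : SimpleGraph V} {G' : SimpleGraph W}

theorem Hom.edist_le (f : G →g G') (u v : V) : G'.edist (f u) (f v) ≤ G.edist u v :=
  le_sInf <| by
    rintro _ ⟨p, rfl⟩
    simpa using SimpleGraph.edist_le (p.map f)

theorem Walk.exists_doubleCover_lift {u v : V} (p : G.Walk u v) (i : Bool) :
    ∃ (j : Bool) (q : (doubleCover G).Walk (u, i) (v, j)), q.length = p.length := by
  induction p generalizing i with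
  | nil => exact ⟨i, .nil, rfl⟩
  | cons h p ih =>
    obtain ⟨j, q, hq⟩ := ih (!i)
    have hadj : (doubleCover G).Adj (_, i) (_, !i) := ⟨h, by simp⟩
    exact ⟨j, .cons hadj q, by simp [hq]⟩

end SimpleGraph

open SimpleGraph

section DoubleCover

variable {V : Type*}

theorem exists_edist_doubleCover_le (G : SimpleGraph V) (u v : V) (i : Bool) :
    ∃ j : Bool, (doubleCover G).edist (u, i) (v, j) ≤ G.edist u v := by
  rcases eq_or_ne (G.edist u v) ⊤ with h | h
  · exact ⟨i, by simp [h]⟩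
  obtain ⟨p, hp⟩ := exists_walk_of_edist_ne_top h
  obtain ⟨j, q, hq⟩ := p.exists_doubleCover_lift i
  exact ⟨j, hp ▸ hq ▸ edist_le q⟩

variable {G : SimpleGraph V} {H' : SimpleGraph (V × Bool)}

def projectDownHom (hsub : H' ≤ doubleCover G) : H' →g projectDown G H' hsub where
  toFun := Prod.fst
  map_rel' {a b} h := ⟨a.2, b.2, h⟩

theorem edist_projectDown_le (hsub : H' ≤ doubleCover G) (a b : V × Bool) :
    (projectDown G H' hsub).edist a.1 b.1 ≤ H'.edist a b :=
  (projectDownHom hsub).edist_le a b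

theorem edgeSet_projectDown_subset (hsub : H' ≤ doubleCover G) :
    (projectDown G H' hsub).edgeSet ⊆ Sym2.map Prod.fst '' H'.edgeSet := by
  rintro ⟨x, y⟩ ⟨i, j, h⟩
  exact ⟨s((x, i), (y, j)), h, rfl⟩

theorem ncard_edgeSet_projectDown_le [Finite V] (hsub : H' ≤ doubleCover G) :
    (projectDown G H' hsub).edgeSet.ncard ≤ H'.edgeSet.ncard :=
  calc (projectDown G H' hsub).edgeSet.ncard
      ≤ (Sym2.map Prod.fst '' H'.edgeSet).ncard :=
        Set.ncard_le_ncard (edgeSet_projectDown_subset hsub) (Set.toFinite _)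
    _ ≤ H'.edgeSet.ncard := Set.ncard_image_le (Set.toFinite _)

end DoubleCover

/-- The bipartite double cover construction preserves additive spanners: if `H'` is an
additive `+2c`-spanner of the double cover `G'` of `G`, then the projection `H` of `H'`
down to `V` is an additive `+2c`-spanner of `G` with at most as many edges as `H'`. -/
theorem doubleCover_spanner_projection {V : Type*} [Fintype V]
    (G : SimpleGraph V) (c : ℕ)
    (H' : SimpleGraph (V × Bool)) (hsub : H' ≤ doubleCover G)
    (hspan : ∀ a b : V × Bool,
      H'.edist a b ≤ (doubleCover G).edist a b + (2 * c : ℕ∞)) :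
    (∀ u v : V, (projectDown G H' hsub).edist u v ≤ G.edist u v + (2 * c : ℕ∞)) ∧
    (projectDown G H' hsub).edgeSet.ncard ≤ H'.edgeSet.ncard := by
  refine ⟨fun u v => ?_, ncard_edgeSet_projectDown_le hsub⟩
  obtain ⟨j, hj⟩ := exists_edist_doubleCover_le G u v false
  calc (projectDown G H' hsub).edist u v ≤ H'.edist (u, false) (v, j) :=
        edist_projectDown_le hsub (u, false) (v, j)
    _ ≤ (doubleCover G).edist (u, false) (v, j) + (2 * c : ℕ∞) := hspan _ _
    _ ≤ G.edist u v + (2 * c : ℕ∞) := by gcongr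
end
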